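/- Upward Löwenheim–Skolem for split signatures: Let Σ be split by Λ into {Σ_λ}, let 𝔸 be a Σ-structure, and for each λ let κ_λ ≥ max(|Σ_λ|, ℵ₀, sup{|σ^𝔸| : σ ∈ λ, σ^𝔸 infinite}). Then there is a Σ-structure 𝔹 containing 𝔸 as an elementary substructure with |σ^𝔹| = κ_λ for every infinite-sorted σ ∈ λ and σ^𝔹 = σ^𝔸 for every finite-sorted σ. -/

import Mathlib

set_option autoImplicit false

/-- A many-sorted first-order signature. -/
structure MSSignature : Type 1 where
  Sorts : Type
  Func : Type
  Pred : Type
  funcDom : Func → List Sorts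
  funcCod : Func → Sorts
  predDom : Pred → List Sorts

namespace MS

variable (Sg : MSSignature)

/-- Many-sorted terms; variables of each sort are indexed by naturals. -/
inductive Term : Sg.Sorts → Type where
  | var (s : Sg.Sorts) (n : ℕ) : Term s
  | app (f : Sg.Func)
      (args : ∀ i : Fin (Sg.funcDom f).length, Term ((Sg.funcDom f).get i)) :
      Term (Sg.funcCod f)

/-- Many-sorted first-order formulas. -/
inductive Formula : Type where
  | eq {s : Sg.Sorts} (t u : Term Sg s) : Formula
  | pred (P : Sg.Pred)
      (args : ∀ i : Fin (Sg.predDom P).length, Term Sg ((Sg.predDom P).get i)) : Formula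
  | falsum : Formula
  | imp (φ ψ : Formula) : Formula
  | all (s : Sg.Sorts) (n : ℕ) (φ : Formula) : Formula

/-- A structure for a many-sorted signature: each sort gets a nonempty domain. -/
structure Structure : Type 1 where
  dom : Sg.Sorts → Type
  dom_nonempty : ∀ s, Nonempty (dom s)
  interpFunc : ∀ f : Sg.Func,
    (∀ i : Fin (Sg.funcDom f).length, dom ((Sg.funcDom f).get i)) → dom (Sg.funcCod f)
  interpPred : ∀ P : Sg.Pred,
    (∀ i : Fin (Sg.predDom P).length, dom ((Sg.predDom P).get i)) → Prop

variable {Sg}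

/-- Variable assignments. -/
def Assign (A : Structure Sg) : Type := ∀ s : Sg.Sorts, ℕ → A.dom s

open Classical in
noncomputable
def Assign.update {A : Structure Sg} (ν : Assign A) (s : Sg.Sorts) (n : ℕ) (a : A.dom s) :
    Assign A := fun t m =>
  if h : s = t then (if m = n then h ▸ a else ν t m) else ν t m

def Term.eval {A : Structure Sg} (ν : Assign A) : ∀ {s : Sg.Sorts}, Term Sg s → A.dom s
  | _, .var s n => ν s n
  | _, .app f args => A.interpFunc f fun i => Term.eval ν (args i)

/-- Tarskian satisfaction. -/
def Sat (A : Structure Sg) (ν : Assign A) : Formula Sg → Prop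
  | .eq t u => t.eval ν = u.eval ν
  | .pred P args => A.interpPred P fun i => (args i).eval ν
  | .falsum => False
  | .imp φ ψ => Sat A ν φ → Sat A ν ψ
  | .all s n φ => ∀ a : A.dom s, Sat A (ν.update s n a) φ

/-- Derived connectives. -/
def Formula.not (φ : Formula Sg) : Formula Sg := .imp φ .falsum
def Formula.and (φ ψ : Formula Sg) : Formula Sg := (Formula.imp φ ψ.not).not
def Formula.or (φ ψ : Formula Sg) : Formula Sg := .imp φ.not ψ
def Formula.ex (s : Sg.Sorts) (n : ℕ) (φ : Formula Sg) : Formula Sg :=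
  ((Formula.all s n φ.not)).not
def Formula.andList : List (Formula Sg) → Formula Sg :=
  List.foldr Formula.and (Formula.not .falsum)
def Formula.orList : List (Formula Sg) → Formula Sg :=
  List.foldr Formula.or .falsum

/-- Occurrence of variable `(s, n)` in a term. -/
def Term.varOccurs (s : Sg.Sorts) (n : ℕ) : ∀ {t : Sg.Sorts}, Term Sg t → Prop
  | _, .var s' n' => s = s' ∧ n = n'
  | _, .app _ args => ∃ i, Term.varOccurs s n (args i)

/-- Free occurrence of variable `(s, n)` in a formula. -/
def Formula.varFree (s : Sg.Sorts) (n : ℕ) : Formula Sg → Prop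
  | .eq t u => t.varOccurs s n ∨ u.varOccurs s n
  | .pred _ args => ∃ i, (args i).varOccurs s n
  | .falsum => False
  | .imp φ ψ => φ.varFree s n ∨ ψ.varFree s n
  | .all s' n' φ => φ.varFree s n ∧ ¬(s = s' ∧ n = n')

def Formula.IsSentence (φ : Formula Sg) : Prop := ∀ s n, ¬ φ.varFree s n

/-- Quantifier-free formulas. -/
def Formula.IsQF : Formula Sg → Prop
  | .eq _ _ => True
  | .pred _ _ => True
  | .falsum => True
  | .imp φ ψ => φ.IsQF ∧ ψ.IsQF
  | .all _ _ _ => False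

/-- A structure is a model of a set of formulas (a theory) if it satisfies
every axiom under every assignment. -/
def Models (A : Structure Sg) (T : Set (Formula Sg)) : Prop :=
  ∀ φ ∈ T, ∀ ν : Assign A, Sat A ν φ

/-- Elementary equivalence: same sentences hold. -/
def ElemEquiv (A B : Structure Sg) : Prop :=
  ∀ φ : Formula Sg, φ.IsSentence →
    ((∀ ν : Assign A, Sat A ν φ) ↔ (∀ ν : Assign B, Sat B ν φ))

/-- Substructures: sort-wise subsets closed under the functions. -/
structure Substructure (A : Structure Sg) : Type 1 where
  carrier : ∀ s : Sg.Sorts, Set (A.dom s)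
  carrier_nonempty : ∀ s, (carrier s).Nonempty
  closed : ∀ (f : Sg.Func)
    (args : ∀ i : Fin (Sg.funcDom f).length, A.dom ((Sg.funcDom f).get i)),
    (∀ i, args i ∈ carrier _) → A.interpFunc f args ∈ carrier _

/-- The induced structure on a substructure. -/
def Substructure.toStructure {A : Structure Sg} (B : Substructure A) : Structure Sg where
  dom s := ↥(B.carrier s)
  dom_nonempty s := ⟨⟨(B.carrier_nonempty s).choose, (B.carrier_nonempty s).choose_spec⟩⟩
  interpFunc f args :=
    ⟨A.interpFunc f fun i => (args i).1, B.closed f _ fun i => (args i).2⟩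
  interpPred P args := A.interpPred P fun i => (args i).1

/-- View an assignment into a substructure as an assignment into the ambient structure. -/
def Substructure.amb {A : Structure Sg} (B : Substructure A)
    (ν : Assign B.toStructure) : Assign A := fun s n => (ν s n).1

/-- `B` is an elementary substructure of `A`. -/
def Substructure.IsElementary {A : Structure Sg} (B : Substructure A) : Prop :=
  ∀ (φ : Formula Sg) (ν : Assign B.toStructure),
    Sat B.toStructure ν φ ↔ Sat A (B.amb ν) φ

/-- Isomorphisms of structures. -/
structure Iso (A B : Structure Sg) : Type 1 where
  toEquiv : ∀ s, A.dom s ≃ B.dom s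
  map_func : ∀ (f : Sg.Func) args,
    toEquiv _ (A.interpFunc f args) = B.interpFunc f (fun i => toEquiv _ (args i))
  map_pred : ∀ (P : Sg.Pred) args,
    A.interpPred P args ↔ B.interpPred P (fun i => toEquiv _ (args i))

end MS

/-- The cardinality of a signature: sorts + function symbols + predicate symbols. -/
noncomputable def MSSignature.card (Sg : MSSignature) : Cardinal :=
  Cardinal.mk Sg.Sorts + Cardinal.mk Sg.Func + Cardinal.mk Sg.Pred

/-- A countable signature. -/
def MSSignature.IsCountable (Sg : MSSignature) : Prop :=
  Countable Sg.Sorts ∧ Countable Sg.Func ∧ Countable Sg.Pred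

namespace MS

variable {Sg : MSSignature}

/-- A splitting of a signature by a partition `Λ` of its sorts: every function and
predicate symbol uses sorts from a single part only. -/
structure Split (Sg : MSSignature) (Λ : Type) where
  sortPart : Sg.Sorts → Λ
  funcPart : Sg.Func → Λ
  predPart : Sg.Pred → Λ
  func_dom : ∀ (f : Sg.Func) (i : Fin (Sg.funcDom f).length),
    sortPart ((Sg.funcDom f).get i) = funcPart f
  func_cod : ∀ f : Sg.Func, sortPart (Sg.funcCod f) = funcPart f
  pred_dom : ∀ (P : Sg.Pred) (i : Fin (Sg.predDom P).length),
    sortPart ((Sg.predDom P).get i) = predPart P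

/-- A term lies in the sub-signature `Σ_l`. -/
def Term.inPart {Λ : Type} (sp : Split Sg Λ) (l : Λ) :
    ∀ {s : Sg.Sorts}, Term Sg s → Prop
  | s, .var _ _ => sp.sortPart s = l
  | _, .app f args => sp.funcPart f = l ∧ ∀ i, Term.inPart sp l (args i)

/-- A formula lies in the sub-signature `Σ_l`: all its symbols and the sorts of all
its variables belong to the part `l`. -/
def Formula.inPart {Λ : Type} (sp : Split Sg Λ) (l : Λ) : Formula Sg → Prop
  | .eq (s := s) t u => sp.sortPart s = l ∧ t.inPart sp l ∧ u.inPart sp l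
  | .pred P args => sp.predPart P = l ∧ ∀ i, (args i).inPart sp l
  | .falsum => True
  | .imp φ ψ => φ.inPart sp l ∧ ψ.inPart sp l
  | .all s _ φ => sp.sortPart s = l ∧ φ.inPart sp l

/-- A generalized `Λ`-cube: a conjunction of formulas, each over a single
sub-signature, with pairwise distinct parts. -/
def Formula.IsGenCube {Λ : Type} (sp : Split Sg Λ) (φ : Formula Sg) : Prop :=
  ∃ L : List (Λ × Formula Sg), (L.map Prod.fst).Nodup ∧
    (∀ p ∈ L, (p.2).inPart sp p.1) ∧ φ = Formula.andList (L.map Prod.snd)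

/-- A generalized `Λ`-clause: a disjunction of formulas, each over a single
sub-signature, with pairwise distinct parts. -/
def Formula.IsGenClause {Λ : Type} (sp : Split Sg Λ) (φ : Formula Sg) : Prop :=
  ∃ L : List (Λ × Formula Sg), (L.map Prod.fst).Nodup ∧
    (∀ p ∈ L, (p.2).inPart sp p.1) ∧ φ = Formula.orList (L.map Prod.snd)

/-- Generalized disjunctive normal form: a disjunction of generalized cubes. -/
def Formula.IsGDNF {Λ : Type} (sp : Split Sg Λ) (φ : Formula Sg) : Prop :=
  ∃ L : List (Formula Sg), (∀ ψ ∈ L, ψ.IsGenCube sp) ∧ φ = Formula.orList L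

/-- Generalized conjunctive normal form: a conjunction of generalized clauses. -/
def Formula.IsGCNF {Λ : Type} (sp : Split Sg Λ) (φ : Formula Sg) : Prop :=
  ∃ L : List (Formula Sg), (∀ ψ ∈ L, ψ.IsGenClause sp) ∧ φ = Formula.andList L

/-- Logical equivalence of many-sorted formulas. -/
def LogEquiv (φ ψ : Formula Sg) : Prop :=
  ∀ (A : Structure Sg) (ν : Assign A), Sat A ν φ ↔ Sat A ν ψ

/-- The cardinality of the sub-signature `Σ_l` determined by a splitting. -/
noncomputable def Split.partCard {Λ : Type} (sp : Split Sg Λ) (l : Λ) : Cardinal :=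
  Cardinal.mk {s : Sg.Sorts // sp.sortPart s = l} +
    Cardinal.mk {f : Sg.Func // sp.funcPart f = l} +
    Cardinal.mk {P : Sg.Pred // sp.predPart P = l}

end MS

open MS Cardinal

/-!
Take an ultrapower of `A` over an ultrafilter on the finite subsets of a set of size
`sup_λ κ_λ` that extends `atTop`. It is an elementary extension in which every infinite sort has
at least `sup_λ κ_λ` elements, while finite sorts do not grow. Inside it, close `A` together with
`κ_λ` new elements of each infinite sort of part `λ` under the function symbols and under
Tarski–Vaught witnesses for formulas lying in a single part. There are at most `κ_λ` formulas of
part `λ`, so every sort of part `λ` of this hull has size `κ_λ`. The hull is elementary because, in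
a split signature, the truth value of a formula is a Boolean function of the truth values of
finitely many single-part formulas, and requantifying a variable of part `λ` only changes the
truth values of the part-`λ` ones.
-/

namespace Cardinal

theorem mk_sigma_le_of_le {α : Type} {β : α → Type} {c : Cardinal} (hc : ℵ₀ ≤ c) (hα : #α ≤ c)
    (hβ : ∀ a, #(β a) ≤ c) : #(Σ a, β a) ≤ c := by
  rw [mk_sigma]
  exact (sum_le_mk_mul_iSup _).trans (mul_le_of_le hc hα (ciSup_le' hβ))

theorem mk_pi_le_of_le {ι : Type} [Finite ι] {β : ι → Type} {c : Cardinal} (hc : ℵ₀ ≤ c)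
    (hβ : ∀ i, #(β i) ≤ c) : #(∀ i, β i) ≤ c := by
  have := Fintype.ofFinite ι
  rw [mk_pi]
  calc prod (fun i => #(β i)) ≤ prod fun _ : ι => c := prod_le_prod _ _ hβ
    _ = c ^ Fintype.card ι := by rw [prod_const', mk_fintype, power_natCast]
    _ ≤ c := power_nat_le hc

end Cardinal

namespace MS

variable {Sg : MSSignature} {Λ : Type} {sp : Split Sg Λ} {l : Λ}

section Semantics

variable {A : Structure Sg} {ν : Assign A}

theorem sat_not_iff {φ : Formula Sg} : Sat A ν φ.not ↔ ¬ Sat A ν φ := Iff.rfl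

theorem sat_and_iff {φ ψ : Formula Sg} : Sat A ν (φ.and ψ) ↔ Sat A ν φ ∧ Sat A ν ψ := by
  simp only [Formula.and, Formula.not, Sat]
  tauto

theorem sat_ex_iff {s : Sg.Sorts} {n : ℕ} {φ : Formula Sg} :
    Sat A ν (.ex s n φ) ↔ ∃ a, Sat A (ν.update s n a) φ := by
  simp only [Formula.ex, Formula.not, Sat]
  exact not_forall_not

theorem sat_andList_iff {L : List (Formula Sg)} :
    Sat A ν (Formula.andList L) ↔ ∀ φ ∈ L, Sat A ν φ := by
  induction L with
  | nil => exact iff_of_true id (by simp)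
  | cons φ L ih => simp [Formula.andList, ← ih, sat_and_iff]

theorem Assign.update_apply_ne (ν : Assign A) {s t : Sg.Sorts} {n m : ℕ} (a : A.dom s)
    (h : ¬(t = s ∧ m = n)) : ν.update s n a t m = ν t m := by
  unfold Assign.update
  split_ifs with hst hmn
  · subst hst hmn; exact absurd ⟨rfl, rfl⟩ h
  · rfl
  · rfl

theorem Assign.update_apply_congr {ν ν' : Assign A} {s t : Sg.Sorts} {n m : ℕ} (a : A.dom s)
    (h : ν t m = ν' t m) : ν.update s n a t m = ν'.update s n a t m := by
  unfold Assign.update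
  split_ifs <;> first | rfl | exact h

def Assign.map {B : Structure Sg} (F : ∀ s, A.dom s → B.dom s) (ν : Assign A) : Assign B :=
  fun s n => F s (ν s n)

theorem Assign.map_update {B : Structure Sg} (F : ∀ s, A.dom s → B.dom s) (ν : Assign A)
    (s : Sg.Sorts) (n : ℕ) (a : A.dom s) :
    (ν.update s n a).map F = (ν.map F).update s n (F s a) := by
  funext t m
  unfold Assign.map Assign.update
  by_cases hst : s = t
  · subst hst
    by_cases hmn : m = n <;> simp [hmn]
  · simp [hst]

def Term.varList : ∀ {s : Sg.Sorts}, Term Sg s → List (Sg.Sorts × ℕ)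
  | _, .var s n => [(s, n)]
  | _, .app _ args => (List.ofFn fun i => (args i).varList).flatten

def Formula.varList : Formula Sg → List (Sg.Sorts × ℕ)
  | .eq t u => t.varList ++ u.varList
  | .pred _ args => (List.ofFn fun i => (args i).varList).flatten
  | .falsum => []
  | .imp φ ψ => φ.varList ++ ψ.varList
  | .all s n φ => (s, n) :: φ.varList

theorem Term.eval_congr {ν ν' : Assign A} :
    ∀ {s : Sg.Sorts} (t : Term Sg s), (∀ p ∈ t.varList, ν p.1 p.2 = ν' p.1 p.2) →
      t.eval ν = t.eval ν'
  | _, .var s n, h => h (s, n) (List.mem_singleton_self _)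
  | _, .app f args, h => congrArg (A.interpFunc f) <| funext fun i =>
      (args i).eval_congr fun p hp => h p <| by
        simp only [Term.varList, List.mem_flatten, List.mem_ofFn]
        exact ⟨_, ⟨i, rfl⟩, hp⟩

theorem sat_congr :
    ∀ (φ : Formula Sg) {ν ν' : Assign A}, (∀ p ∈ φ.varList, ν p.1 p.2 = ν' p.1 p.2) →
      (Sat A ν φ ↔ Sat A ν' φ)
  | .eq t u, ν, ν', h => by
      simp only [Formula.varList, List.mem_append] at h
      simp only [Sat, t.eval_congr fun p hp => h p (.inl hp),
        u.eval_congr fun p hp => h p (.inr hp)]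
  | .pred P args, ν, ν', h => by
      simp only [Formula.varList, List.mem_flatten, List.mem_ofFn] at h
      simp only [Sat]
      rw [funext fun i => (args i).eval_congr fun p hp => h p ⟨_, ⟨i, rfl⟩, hp⟩]
  | .falsum, _, _, _ => Iff.rfl
  | .imp φ ψ, ν, ν', h => by
      simp only [Formula.varList, List.mem_append] at h
      simp only [Sat, sat_congr φ fun p hp => h p (.inl hp),
        sat_congr ψ fun p hp => h p (.inr hp)]
  | .all _ _ φ, _, _, h => forall_congr' fun a => sat_congr φ fun p hp =>
      Assign.update_apply_congr a (h p (List.mem_cons_of_mem _ hp))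

end Semantics

section Maps

variable {A B : Structure Sg}

theorem Term.eval_map (F : ∀ s, A.dom s → B.dom s)
    (hF : ∀ f args, F _ (A.interpFunc f args) = B.interpFunc f fun i => F _ (args i))
    (ν : Assign A) : ∀ {s : Sg.Sorts} (t : Term Sg s), F s (t.eval ν) = t.eval (ν.map F)
  | _, .var _ _ => rfl
  | _, .app f args => (hF f _).trans <| congrArg _ <| funext fun i => (args i).eval_map F hF ν

theorem Iso.sat_iff (e : Iso A B) :
    ∀ (φ : Formula Sg) (ν : Assign A), Sat A ν φ ↔ Sat B (ν.map fun s => e.toEquiv s) φ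
  | .eq t u, ν => by
      simp only [Sat, ← Term.eval_map (fun s => e.toEquiv s) e.map_func,
        (e.toEquiv _).apply_eq_iff_eq]
  | .pred P args, ν => by
      simp only [Sat, e.map_pred, Term.eval_map (fun s => e.toEquiv s) e.map_func]
  | .falsum, _ => Iff.rfl
  | .imp φ ψ, ν => imp_congr (e.sat_iff φ ν) (e.sat_iff ψ ν)
  | .all s n φ, ν => by
      simp only [Sat, e.sat_iff φ, Assign.map_update]
      exact ⟨fun h b => by simpa using h ((e.toEquiv s).symm b), fun h a => h _⟩

theorem Substructure.eval_amb (D : Substructure A) (ν : Assign D.toStructure)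
    {s : Sg.Sorts} (t : Term Sg s) : (t.eval ν).1 = t.eval (D.amb ν) :=
  t.eval_map (fun s (x : D.carrier s) => x.1) (fun _ _ => rfl) ν

theorem Substructure.amb_update (D : Substructure A) (ν : Assign D.toStructure)
    (s : Sg.Sorts) (n : ℕ) (a : D.toStructure.dom s) :
    D.amb (ν.update s n a) = (D.amb ν).update s n a.1 :=
  Assign.map_update (A := D.toStructure) (B := A) (fun _ x => x.1) ν s n a

variable (A B) in
structure ElementaryEmbedding where
  toFun : ∀ s, A.dom s → B.dom s
  injective : ∀ s, Function.Injective (toFun s)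
  map_func : ∀ (f : Sg.Func) args,
    toFun _ (A.interpFunc f args) = B.interpFunc f fun i => toFun _ (args i)
  map_pred : ∀ (P : Sg.Pred) args,
    A.interpPred P args ↔ B.interpPred P fun i => toFun _ (args i)
  sat_iff : ∀ (φ : Formula Sg) (ν : Assign A), Sat A ν φ ↔ Sat B (ν.map toFun) φ

namespace ElementaryEmbedding

variable (e : ElementaryEmbedding A B)

def range : Substructure B where
  carrier s := Set.range (e.toFun s)
  carrier_nonempty s := Set.range_nonempty_iff_nonempty.2 (A.dom_nonempty s)
  closed f args hargs := by
    choose a ha using hargs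
    exact ⟨A.interpFunc f a, (e.map_func f a).trans (congrArg _ (funext ha))⟩

noncomputable def isoRange : Iso A e.range.toStructure where
  toEquiv s := Equiv.ofInjective (e.toFun s) (e.injective s)
  map_func f args := Subtype.ext (e.map_func f args)
  map_pred P args := e.map_pred P args

theorem isElementary_range : e.range.IsElementary := by
  intro φ ν
  let ν₀ : Assign A := ν.map fun s => (e.isoRange.toEquiv s).symm
  have hν₀ : ν₀.map (fun s => e.isoRange.toEquiv s) = ν :=
    funext₂ fun _ _ => Equiv.apply_symm_apply _ _
  have hamb : ν₀.map e.toFun = e.range.amb ν := funext₂ fun s n =>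
    congrArg Subtype.val (Equiv.apply_symm_apply (e.isoRange.toEquiv s) (ν s n))
  rw [← hν₀, ← e.isoRange.sat_iff, e.sat_iff, hamb, hν₀]

def codRestrict (D : Substructure B) (hD : D.IsElementary)
    (h : ∀ s a, e.toFun s a ∈ D.carrier s) : ElementaryEmbedding A D.toStructure where
  toFun s a := ⟨e.toFun s a, h s a⟩
  injective s _ _ hab := e.injective s (congrArg Subtype.val hab)
  map_func f args := Subtype.ext (e.map_func f args)
  map_pred P args := e.map_pred P args
  sat_iff φ ν := (e.sat_iff φ ν).trans (hD φ (ν.map fun s a => ⟨e.toFun s a, h s a⟩)).symm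

end ElementaryEmbedding

end Maps

section Parts

theorem Formula.inPart_not {φ : Formula Sg} (h : φ.inPart sp l) : φ.not.inPart sp l :=
  ⟨h, trivial⟩

theorem Formula.inPart_andList {L : List (Formula Sg)} (h : ∀ φ ∈ L, φ.inPart sp l) :
    (Formula.andList L).inPart sp l := by
  induction L with
  | nil => exact inPart_not trivial
  | cons φ L ih =>
    simp only [List.mem_cons, forall_eq_or_imp] at h
    exact inPart_not ⟨h.1, inPart_not (ih h.2)⟩

theorem Formula.inPart_ex {s : Sg.Sorts} {n : ℕ} {φ : Formula Sg} (hs : sp.sortPart s = l)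
    (h : φ.inPart sp l) : (Formula.ex s n φ).inPart sp l :=
  inPart_not ⟨hs, inPart_not h⟩

theorem Term.inPart_sortPart : ∀ {s : Sg.Sorts} (t : Term Sg s), t.inPart sp (sp.sortPart s)
  | _, .var _ _ => rfl
  | _, .app f args => ⟨(sp.func_cod f).symm, fun i =>
      (sp.func_dom f i).trans (sp.func_cod f).symm ▸ (args i).inPart_sortPart⟩

theorem Term.sortPart_of_mem_varList :
    ∀ {s : Sg.Sorts} (t : Term Sg s), t.inPart sp l → ∀ p ∈ t.varList, sp.sortPart p.1 = l
  | _, .var _ _, h, _, hp => by rw [List.mem_singleton.1 hp]; exact h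
  | _, .app _ args, h, p, hp => by
      simp only [Term.varList, List.mem_flatten, List.mem_ofFn] at hp
      obtain ⟨_, ⟨i, rfl⟩, hp⟩ := hp
      exact (args i).sortPart_of_mem_varList (h.2 i) p hp

theorem Formula.sortPart_of_mem_varList :
    ∀ (φ : Formula Sg), φ.inPart sp l → ∀ p ∈ φ.varList, sp.sortPart p.1 = l
  | .eq t u, h, p, hp => (List.mem_append.1 hp).elim (t.sortPart_of_mem_varList h.2.1 p)
      (u.sortPart_of_mem_varList h.2.2 p)
  | .pred _ args, h, p, hp => by
      simp only [Formula.varList, List.mem_flatten, List.mem_ofFn] at hp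
      obtain ⟨_, ⟨i, rfl⟩, hp⟩ := hp
      exact (args i).sortPart_of_mem_varList (h.2 i) p hp
  | .imp φ ψ, h, p, hp => (List.mem_append.1 hp).elim (φ.sortPart_of_mem_varList h.1 p)
      (ψ.sortPart_of_mem_varList h.2 p)
  | .all _ _ φ, h, p, hp => (List.mem_cons.1 hp).elim (fun hp => hp ▸ h.1)
      (φ.sortPart_of_mem_varList h.2 p)

theorem sat_update_of_inPart {A : Structure Sg} {ν : Assign A} {φ : Formula Sg}
    (hφ : φ.inPart sp l) {s : Sg.Sorts} (hs : sp.sortPart s ≠ l) (n : ℕ) (a : A.dom s) :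
    Sat A (ν.update s n a) φ ↔ Sat A ν φ :=
  sat_congr φ fun p hp => Assign.update_apply_ne ν a fun h =>
    hs (h.1 ▸ φ.sortPart_of_mem_varList hφ p hp)

end Parts

section Determination

open Classical

variable {B : Structure Sg}

noncomputable def Formula.pattern (Ψ S : Finset (Formula Sg)) : Formula Sg :=
  Formula.andList (Ψ.toList.map fun ψ => if ψ ∈ S then ψ else ψ.not)

theorem sat_pattern_iff {ν : Assign B} {Ψ S : Finset (Formula Sg)} :
    Sat B ν (Formula.pattern Ψ S) ↔ ∀ ψ ∈ Ψ, (Sat B ν ψ ↔ ψ ∈ S) := by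
  simp only [Formula.pattern, sat_andList_iff, List.forall_mem_map, Finset.mem_toList]
  refine forall₂_congr fun ψ _ => ?_
  split_ifs with h <;> simp [h, sat_not_iff]

theorem sat_pattern_filter_iff {ν μ : Assign B} {Ψ : Finset (Formula Sg)} :
    Sat B ν (Formula.pattern Ψ (Ψ.filter (Sat B μ ·))) ↔
      ∀ ψ ∈ Ψ, (Sat B ν ψ ↔ Sat B μ ψ) := by
  rw [sat_pattern_iff]
  exact forall₂_congr fun ψ hψ => by rw [Finset.mem_filter, and_iff_right hψ]

theorem Formula.inPart_pattern {Ψ : Finset (Formula Sg)} (h : ∀ ψ ∈ Ψ, ψ.inPart sp l)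
    (S : Finset (Formula Sg)) : (Formula.pattern Ψ S).inPart sp l :=
  inPart_andList <| List.forall_mem_map.2 fun ψ hψ => by
    have := h ψ (Finset.mem_toList.1 hψ)
    split_ifs
    exacts [this, inPart_not this]

variable (B) in
def Formula.IsDeterminedBy (Ψ : Finset (Formula Sg)) (φ : Formula Sg) : Prop :=
  ∀ ν ν' : Assign B, (∀ ψ ∈ Ψ, Sat B ν ψ ↔ Sat B ν' ψ) → (Sat B ν φ ↔ Sat B ν' φ)

variable (sp) in
noncomputable def partFilter (s : Sg.Sorts) (Ψ : Finset (Formula Sg)) : Finset (Formula Sg) :=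
  Ψ.filter (·.inPart sp (sp.sortPart s))

/-- Updating a variable of sort `s` only moves the formulas of the part of `s`. -/
theorem Formula.IsDeterminedBy.sat_update_iff {Ψ : Finset (Formula Sg)} {φ : Formula Sg}
    (hφ : φ.IsDeterminedBy B Ψ) (hΨ : ∀ ψ ∈ Ψ, ∃ l, ψ.inPart sp l) {s : Sg.Sorts} {n : ℕ}
    {ν ν' : Assign B} (hνν' : ∀ ψ ∈ Ψ, ¬ ψ.inPart sp (sp.sortPart s) →
      (Sat B ν ψ ↔ Sat B ν' ψ)) {a a' : B.dom s}
    (hpat : Sat B (ν.update s n a) (Formula.pattern (partFilter sp s Ψ)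
      ((partFilter sp s Ψ).filter (Sat B (ν'.update s n a') ·)))) :
    Sat B (ν.update s n a) φ ↔ Sat B (ν'.update s n a') φ := by
  refine hφ _ _ fun ψ hψ => ?_
  by_cases hl : ψ.inPart sp (sp.sortPart s)
  · exact sat_pattern_filter_iff.1 hpat ψ (Finset.mem_filter.2 ⟨hψ, hl⟩)
  · obtain ⟨l', hl'⟩ := hΨ ψ hψ
    have hs : sp.sortPart s ≠ l' := fun h => hl (h ▸ hl')
    rw [sat_update_of_inPart hl' hs, sat_update_of_inPart hl' hs]
    exact hνν' ψ hψ hl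

theorem Formula.isDeterminedBy_self (φ : Formula Sg) : φ.IsDeterminedBy B {φ} :=
  fun _ _ h => h φ (Finset.mem_singleton_self φ)

theorem Formula.IsDeterminedBy.imp {Ψ₁ Ψ₂ : Finset (Formula Sg)} {φ ψ : Formula Sg}
    (hφ : φ.IsDeterminedBy B Ψ₁) (hψ : ψ.IsDeterminedBy B Ψ₂) :
    (φ.imp ψ).IsDeterminedBy B (Ψ₁ ∪ Ψ₂) := fun ν ν' h =>
  imp_congr (hφ ν ν' fun χ hχ => h χ (Finset.mem_union_left _ hχ))
    (hψ ν ν' fun χ hχ => h χ (Finset.mem_union_right _ hχ))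

/-- `∀ x φ` is determined by the formulas determining `φ` together with the finitely many
part formulas `∃ x (pattern)`, one for each way of assigning truth values to the formulas of
the part of `x`. -/
theorem Formula.IsDeterminedBy.all {Ψ : Finset (Formula Sg)} {φ : Formula Sg}
    (hφ : φ.IsDeterminedBy B Ψ) (hΨ : ∀ ψ ∈ Ψ, ∃ l, ψ.inPart sp l) (s : Sg.Sorts) (n : ℕ) :
    (Formula.all s n φ).IsDeterminedBy B (Ψ ∪ (partFilter sp s Ψ).powerset.image
      fun S => Formula.ex s n (Formula.pattern (partFilter sp s Ψ) S)) := by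
  suffices key : ∀ ν ν' : Assign B, (∀ ψ ∈ Ψ ∪ (partFilter sp s Ψ).powerset.image
      (fun S => Formula.ex s n (Formula.pattern (partFilter sp s Ψ) S)),
        Sat B ν ψ ↔ Sat B ν' ψ) →
      (∀ a, Sat B (ν.update s n a) φ) → ∀ a', Sat B (ν'.update s n a') φ from
    fun ν ν' h => ⟨key ν ν' h, key ν' ν fun ψ hψ => (h ψ hψ).symm⟩
  intro ν ν' h hν a'
  set S := (partFilter sp s Ψ).filter (Sat B (ν'.update s n a') ·)
  have hS : Sat B ν (Formula.ex s n (Formula.pattern (partFilter sp s Ψ) S)) := by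
    refine (h _ (Finset.mem_union_right _ (Finset.mem_image_of_mem _ ?_))).2 ?_
    · exact Finset.mem_powerset.2 (Finset.filter_subset _ _)
    · exact sat_ex_iff.2 ⟨a', sat_pattern_filter_iff.2 fun _ _ => Iff.rfl⟩
  obtain ⟨a, ha⟩ := sat_ex_iff.1 hS
  exact (hφ.sat_update_iff hΨ (fun ψ hψ _ => h ψ (Finset.mem_union_left _ hψ)) ha).1 (hν a)

variable (sp B) in
/-- A semantic form of the normal form theorem behind `Formula.IsGDNF`: in a split signature,
every formula is a Boolean combination of single-part formulas. -/
theorem exists_isDeterminedBy (φ : Formula Sg) :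
    ∃ Ψ : Finset (Formula Sg), (∀ ψ ∈ Ψ, ∃ l, ψ.inPart sp l) ∧ φ.IsDeterminedBy B Ψ := by
  induction φ with
  | eq t u =>
    refine ⟨_, ?_, Formula.isDeterminedBy_self _⟩
    simp only [Finset.mem_singleton, forall_eq]
    exact ⟨_, rfl, t.inPart_sortPart, u.inPart_sortPart⟩
  | pred P args =>
    refine ⟨_, ?_, Formula.isDeterminedBy_self _⟩
    simp only [Finset.mem_singleton, forall_eq]
    exact ⟨_, rfl, fun i => sp.pred_dom P i ▸ (args i).inPart_sortPart⟩
  | falsum => exact ⟨∅, by simp, fun _ _ _ => Iff.rfl⟩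
  | imp φ ψ ihφ ihψ =>
    obtain ⟨Ψ₁, hΨ₁, h₁⟩ := ihφ
    obtain ⟨Ψ₂, hΨ₂, h₂⟩ := ihψ
    refine ⟨Ψ₁ ∪ Ψ₂, fun χ hχ => ?_, h₁.imp h₂⟩
    exact (Finset.mem_union.1 hχ).elim (hΨ₁ χ) (hΨ₂ χ)
  | all s n φ ih =>
    obtain ⟨Ψ, hΨ, hφ⟩ := ih
    refine ⟨_, fun χ hχ => ?_, hφ.all hΨ s n⟩
    rcases Finset.mem_union.1 hχ with hχ | hχ
    · exact hΨ χ hχ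
    · obtain ⟨S, -, rfl⟩ := Finset.mem_image.1 hχ
      exact ⟨_, Formula.inPart_ex rfl (Formula.inPart_pattern
        (fun ψ hψ => (Finset.mem_filter.1 hψ).2) S)⟩

variable (sp) in
/-- The Tarski–Vaught test, restricted to formulas in the part of the quantified variable. -/
def Substructure.IsPartTVClosed (D : Substructure B) : Prop :=
  ∀ (s : Sg.Sorts) (n : ℕ) (φ : Formula Sg), φ.inPart sp (sp.sortPart s) →
    ∀ (ν : Assign D.toStructure) (b : B.dom s), Sat B ((D.amb ν).update s n b) φ →
      ∃ d ∈ D.carrier s, Sat B ((D.amb ν).update s n d) φ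

theorem Substructure.isElementary_of_isPartTVClosed {D : Substructure B}
    (hD : D.IsPartTVClosed sp) : D.IsElementary := by
  intro φ
  induction φ with
  | eq t u => intro ν; simp only [Sat, ← D.eval_amb]; exact Subtype.ext_iff
  | pred P args => intro ν; show B.interpPred P _ ↔ B.interpPred P _; simp only [D.eval_amb]
  | falsum => exact fun _ => Iff.rfl
  | imp φ ψ ihφ ihψ => exact fun ν => imp_congr (ihφ ν) (ihψ ν)
  | all s n φ ih =>
    intro ν
    simp only [Sat, ih, D.amb_update]
    refine ⟨fun h b => ?_, fun h d => h d.1⟩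
    obtain ⟨Ψ, hΨ, hφ⟩ := exists_isDeterminedBy sp B φ
    obtain ⟨d, hd, hpat⟩ := hD s n _ (Formula.inPart_pattern
      (fun ψ hψ => (Finset.mem_filter.1 hψ).2) _) ν b (sat_pattern_filter_iff.2 fun _ _ => Iff.rfl)
    exact (hφ.sat_update_iff hΨ (fun _ _ _ => Iff.rfl) hpat).1 (h ⟨d, hd⟩)

end Determination

section Counting

theorem Split.card_sorts_le (l : Λ) : #{s : Sg.Sorts // sp.sortPart s = l} ≤ sp.partCard l :=
  (self_le_add_right _ _).trans (self_le_add_right _ _)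

theorem Split.card_funcs_le (l : Λ) : #{f : Sg.Func // sp.funcPart f = l} ≤ sp.partCard l :=
  le_add_self.trans (self_le_add_right _ _)

theorem Split.card_preds_le (l : Λ) : #{P : Sg.Pred // sp.predPart P = l} ≤ sp.partCard l :=
  le_add_self

variable (sp l) in
/-- Node labels of the syntax trees of part `l`: variables, function symbols, equality at a
sort, predicate symbols, `falsum`/`imp` (the `Bool`), and quantifiers. -/
abbrev PartSymbol : Type :=
  ({s : Sg.Sorts // sp.sortPart s = l} × ℕ) ⊕ {f : Sg.Func // sp.funcPart f = l} ⊕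
    {s : Sg.Sorts // sp.sortPart s = l} ⊕ {P : Sg.Pred // sp.predPart P = l} ⊕ Bool ⊕
    ({s : Sg.Sorts // sp.sortPart s = l} × ℕ)

def PartSymbol.arity : PartSymbol sp l → ℕ
  | .inl _ => 0
  | .inr (.inl f) => (Sg.funcDom f.1).length
  | .inr (.inr (.inl _)) => 2
  | .inr (.inr (.inr (.inl P))) => (Sg.predDom P.1).length
  | .inr (.inr (.inr (.inr (.inl b)))) => cond b 2 0
  | .inr (.inr (.inr (.inr (.inr _)))) => 1

variable (sp l) in
abbrev SyntaxTree : Type := WType fun a : PartSymbol sp l => Fin a.arity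

theorem card_partSymbol_le {c : Cardinal} (hc : max (sp.partCard l) ℵ₀ ≤ c) :
    #(PartSymbol sp l) ≤ c := by
  have hω : ℵ₀ ≤ c := le_of_max_le_right hc
  have hS := (sp.card_sorts_le l).trans (le_of_max_le_left hc)
  have hvar : #({s : Sg.Sorts // sp.sortPart s = l} × ℕ) ≤ c := by
    simpa using mul_le_of_le hω hS hω
  simp only [PartSymbol, mk_sum, lift_id]
  refine add_le_of_le hω hvar (add_le_of_le hω ?_ (add_le_of_le hω hS
    (add_le_of_le hω ?_ (add_le_of_le hω (mk_le_aleph0.trans hω) hvar))))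
  exacts [(sp.card_funcs_le l).trans (le_of_max_le_left hc),
    (sp.card_preds_le l).trans (le_of_max_le_left hc)]

def Term.code : ∀ {s : Sg.Sorts} (t : Term Sg s), t.inPart sp l → SyntaxTree sp l
  | _, .var s n, h => ⟨.inl (⟨s, h⟩, n), Fin.elim0⟩
  | _, .app f args, h => ⟨.inr (.inl ⟨f, h.1⟩), fun i => (args i).code (h.2 i)⟩

theorem Term.code_injective : ∀ {s s' : Sg.Sorts} (t : Term Sg s) (t' : Term Sg s')
    (h : t.inPart sp l) (h' : t'.inPart sp l), t.code h = t'.code h' →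
      (⟨s, t⟩ : Σ s, Term Sg s) = ⟨s', t'⟩
  | _, _, .var s n, .var s' n', h, h', e => by
      obtain ⟨hl, -⟩ := WType.mk.inj e
      simp only [Sum.inl.injEq, Prod.mk.injEq] at hl
      obtain ⟨hs, rfl⟩ := hl
      cases congrArg Subtype.val hs
      rfl
  | _, _, .var _ _, .app _ _, _, _, e => by have := (WType.mk.inj e).1; simp at this
  | _, _, .app _ _, .var _ _, _, _, e => by have := (WType.mk.inj e).1; simp at this
  | _, _, .app f args, .app f' args', h, h', e => by
      obtain ⟨hl, e⟩ := WType.mk.inj e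
      simp only [Sum.inr.injEq, Sum.inl.injEq] at hl
      cases congrArg Subtype.val hl
      have hargs : args = args' := funext fun i => sigma_mk_injective
        ((args i).code_injective _ _ _ (congrFun (eq_of_heq e) i))
      rw [hargs]


def Formula.code : ∀ φ : Formula Sg, φ.inPart sp l → SyntaxTree sp l
  | .eq (s := s) t u, h => ⟨.inr (.inr (.inl ⟨s, h.1⟩)), ![t.code h.2.1, u.code h.2.2]⟩
  | .pred P args, h => ⟨.inr (.inr (.inr (.inl ⟨P, h.1⟩))), fun i => (args i).code (h.2 i)⟩
  | .falsum, _ => ⟨.inr (.inr (.inr (.inr (.inl false)))), Fin.elim0⟩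
  | .imp φ ψ, h => ⟨.inr (.inr (.inr (.inr (.inl true)))), ![φ.code h.1, ψ.code h.2]⟩
  | .all s n φ, h => ⟨.inr (.inr (.inr (.inr (.inr (⟨s, h.1⟩, n))))), fun _ => φ.code h.2⟩

theorem Formula.code_injective {φ φ' : Formula Sg} {h : φ.inPart sp l} {h' : φ'.inPart sp l}
    (e : φ.code h = φ'.code h') : φ = φ' := by
  induction φ generalizing φ' with
  | eq t u => ?_
  | pred P args => ?_
  | falsum => ?_
  | imp φ ψ ihφ ihψ => ?_
  | all s n φ ih => ?_
  all_goals
    cases φ' <;> obtain ⟨hl, e⟩ := WType.mk.inj e <;>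
      simp only [Sum.inl.injEq, Sum.inr.injEq, reduceCtorEq, Bool.true_eq_false,
        Bool.false_eq_true, Prod.mk.injEq] at hl
  case eq.eq =>
    rename_i _ t' u' _
    have hs := congrArg Subtype.val hl
    subst hs
    have e := eq_of_heq e
    obtain rfl := sigma_mk_injective (t.code_injective t' _ _ (congrFun e 0))
    obtain rfl := sigma_mk_injective (u.code_injective u' _ _ (congrFun e 1))
    rfl
  case pred.pred P' args' =>
    cases congrArg Subtype.val hl
    exact congrArg _ <| funext fun i => sigma_mk_injective
      ((args i).code_injective _ _ _ (congrFun (eq_of_heq e) i))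
  case falsum.falsum => rfl
  case imp.imp φ' ψ' =>
    have e := eq_of_heq e
    obtain rfl := ihφ (congrFun e 0)
    obtain rfl := ihψ (congrFun e 1)
    rfl
  case all.all s' n' φ' =>
    obtain ⟨hs, rfl⟩ := hl
    cases congrArg Subtype.val hs
    obtain rfl := ih (congrFun (eq_of_heq e) ⟨0, Nat.one_pos⟩)
    rfl

theorem card_formulas_inPart_le {c : Cardinal} (hc : max (sp.partCard l) ℵ₀ ≤ c) :
    #{φ : Formula Sg // φ.inPart sp l} ≤ c := by
  refine (mk_le_of_injective (f := fun φ => φ.1.code φ.2) fun φ φ' e =>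
    Subtype.ext (Formula.code_injective e)).trans ?_
  exact WType.cardinalMk_le_max_aleph0_of_finite.trans
    (max_le (card_partSymbol_le hc) (le_of_max_le_right hc))

end Counting

section Hull

open Classical

variable {B : Structure Sg}

/-- Junk when `∃ x φ` has no witness. -/
noncomputable def witness (ν : Assign B) (s : Sg.Sorts) (n : ℕ) (φ : Formula Sg) : B.dom s :=
  @Classical.epsilon _ (B.dom_nonempty s) fun a => Sat B (ν.update s n a) φ

theorem sat_update_witness {ν : Assign B} {s : Sg.Sorts} {n : ℕ} {φ : Formula Sg}
    (h : ∃ a, Sat B (ν.update s n a) φ) : Sat B (ν.update s n (witness ν s n φ)) φ :=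
  Classical.epsilon_spec h

noncomputable def Assign.extend (V : List (Sg.Sorts × ℕ))
    (g : ∀ p : {p // p ∈ V}, B.dom p.1.1) : Assign B :=
  fun t m => if h : (t, m) ∈ V then g ⟨(t, m), h⟩ else (B.dom_nonempty t).some

theorem sat_update_extend_iff (ν : Assign B) (φ : Formula Sg) (s : Sg.Sorts) (n : ℕ)
    (a : B.dom s) :
    Sat B ((Assign.extend φ.varList fun p => ν p.1.1 p.1.2).update s n a) φ ↔
      Sat B (ν.update s n a) φ :=
  sat_congr φ fun _ hp => Assign.update_apply_congr a (dif_pos hp)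

def funcValues (X : ∀ s, Set (B.dom s)) (s : Sg.Sorts) : Set (B.dom s) :=
  Set.range fun e : Σ f : {f : Sg.Func // Sg.funcCod f = s},
      ∀ i, X ((Sg.funcDom f.1).get i) =>
    e.1.2 ▸ B.interpFunc e.1.1 fun i => (e.2 i).1

variable (sp) in
def partWitnesses (X : ∀ s, Set (B.dom s)) (s : Sg.Sorts) : Set (B.dom s) :=
  Set.range fun e : Σ φ : {φ : Formula Sg // φ.inPart sp (sp.sortPart s)},
      ℕ × ∀ p : {p // p ∈ φ.1.varList}, X p.1.1 =>
    witness (Assign.extend _ fun p => (e.2.2 p).1) s e.2.1 e.1.1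

variable (sp) in
def hullStep (X : ∀ s, Set (B.dom s)) (s : Sg.Sorts) : Set (B.dom s) :=
  X s ∪ funcValues X s ∪ partWitnesses sp X s

variable (sp) in
def hullChain (G : ∀ s, Set (B.dom s)) : ℕ → ∀ s, Set (B.dom s)
  | 0 => G
  | k + 1 => hullStep sp (hullChain G k)

theorem hullChain_mono (G : ∀ s, Set (B.dom s)) (s : Sg.Sorts) :
    Monotone fun k => hullChain sp G k s :=
  monotone_nat_of_le_succ fun _ => Set.subset_union_left.trans Set.subset_union_left

theorem exists_hullChain_of_forall_mem {G : ∀ s, Set (B.dom s)} {ι : Type} [Finite ι]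
    {σ : ι → Sg.Sorts} {x : ∀ i, B.dom (σ i)} (hx : ∀ i, x i ∈ ⋃ k, hullChain sp G k (σ i)) :
    ∃ k, ∀ i, x i ∈ hullChain sp G k (σ i) := by
  choose k hk using fun i => Set.mem_iUnion.1 (hx i)
  obtain ⟨K, hK⟩ := Finite.bddAbove_range k
  exact ⟨K, fun i => hullChain_mono G (σ i) (hK ⟨i, rfl⟩) (hk i)⟩

variable (sp) in
noncomputable def hull (G : ∀ s, Set (B.dom s)) : Substructure B where
  carrier s := ⋃ k, hullChain sp G k s
  carrier_nonempty s := by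
    -- a witness of the parameter-free formula `¬⊥`
    exact ⟨_, Set.mem_iUnion.2 ⟨1, Set.mem_union_right _
      ⟨⟨⟨Formula.falsum.not, Formula.inPart_not trivial⟩, 0, fun p => absurd p.2 List.not_mem_nil⟩,
        rfl⟩⟩⟩
  closed f args hargs := by
    obtain ⟨k, hk⟩ := exists_hullChain_of_forall_mem hargs
    exact Set.mem_iUnion.2 ⟨k + 1,
      Set.mem_union_left _ (Set.mem_union_right _ ⟨⟨⟨f, rfl⟩, fun i => ⟨_, hk i⟩⟩, rfl⟩)⟩

theorem subset_hull (G : ∀ s, Set (B.dom s)) (s : Sg.Sorts) : G s ⊆ (hull sp G).carrier s :=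
  Set.subset_iUnion (fun k => hullChain sp G k s) 0

theorem hull_isPartTVClosed (G : ∀ s, Set (B.dom s)) : (hull sp G).IsPartTVClosed sp := by
  intro s n φ hφ ν b hb
  obtain ⟨k, hk⟩ := exists_hullChain_of_forall_mem (σ := fun p : {p // p ∈ φ.varList} => p.1.1)
    fun p => (ν p.1.1 p.1.2).2
  refine ⟨_, Set.mem_iUnion.2 ⟨k + 1, Set.mem_union_right _ ⟨⟨⟨φ, hφ⟩, n, fun p => ⟨_, hk p⟩⟩,
    rfl⟩⟩, (sat_update_extend_iff _ φ s n _).1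
      (sat_update_witness ⟨b, (sat_update_extend_iff _ φ s n b).2 hb⟩)⟩

theorem card_hullStep_le {κ : Λ → Cardinal} (hκ : ∀ l, max (sp.partCard l) ℵ₀ ≤ κ l)
    {X : ∀ s, Set (B.dom s)} (hX : ∀ s, #(X s) ≤ κ (sp.sortPart s)) (s : Sg.Sorts) :
    #(hullStep sp X s) ≤ κ (sp.sortPart s) := by
  have hω : ℵ₀ ≤ κ (sp.sortPart s) := le_of_max_le_right (hκ _)
  have hfunc : #(funcValues X s) ≤ κ (sp.sortPart s) := by
    refine mk_range_le.trans (mk_sigma_le_of_le hω ?_ fun f => mk_pi_le_of_le hω fun i => ?_)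
    · refine (mk_subtype_mono fun f hf => ?_).trans
        ((sp.card_funcs_le _).trans (le_of_max_le_left (hκ _)))
      rw [← sp.func_cod f, hf]
    · have := hX ((Sg.funcDom f.1).get i)
      rwa [sp.func_dom, ← sp.func_cod, f.2] at this
  have hwit : #(partWitnesses sp X s) ≤ κ (sp.sortPart s) := by
    refine mk_range_le.trans (mk_sigma_le_of_le hω (card_formulas_inPart_le (hκ _)) fun φ => ?_)
    rw [mk_prod, lift_id, lift_id]
    refine mul_le_of_le hω (by simpa using hω) (mk_pi_le_of_le hω fun p => ?_)
    have := hX p.1.1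
    rwa [Formula.sortPart_of_mem_varList φ.1 φ.2 p.1 p.2] at this
  exact (mk_union_le _ _).trans (add_le_of_le hω
    ((mk_union_le _ _).trans (add_le_of_le hω (hX s) hfunc)) hwit)

theorem card_hull_le {κ : Λ → Cardinal} (hκ : ∀ l, max (sp.partCard l) ℵ₀ ≤ κ l)
    {G : ∀ s, Set (B.dom s)} (hG : ∀ s, #(G s) ≤ κ (sp.sortPart s)) (s : Sg.Sorts) :
    #((hull sp G).carrier s) ≤ κ (sp.sortPart s) := by
  have hchain : ∀ k s, #(hullChain sp G k s) ≤ κ (sp.sortPart s) := by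
    intro k
    induction k with
    | zero => exact hG
    | succ k ih => exact card_hullStep_le hκ ih
  have hω : ℵ₀ ≤ κ (sp.sortPart s) := le_of_max_le_right (hκ _)
  exact (mk_iUnion_le _).trans (mul_le_of_le hω (by simpa using hω) (ciSup_le' (hchain · s)))

end Hull

section Ultrapower

open Filter

variable (A : Structure Sg) {I : Type} (U : Ultrafilter I)

noncomputable def Structure.ultrapower : Structure Sg where
  dom s := (U : Filter I).Germ (A.dom s)
  dom_nonempty s := ⟨↑(fun _ : I => (A.dom_nonempty s).some)⟩
  interpFunc f args := ↑fun i => A.interpFunc f fun j => (args j).out i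
  interpPred P args := ∀ᶠ i in (U : Filter I), A.interpPred P fun j => (args j).out i

variable {A U}

def ultraMk {s : Sg.Sorts} (a : I → A.dom s) : (A.ultrapower U).dom s :=
  (a : (U : Filter I).Germ (A.dom s))

theorem ultraMk_eq_iff {s : Sg.Sorts} {a b : I → A.dom s} :
    (ultraMk a : (A.ultrapower U).dom s) = ultraMk b ↔ ∀ᶠ i in (U : Filter I), a i = b i :=
  Germ.coe_eq

theorem ultraMk_surjective {s : Sg.Sorts} :
    Function.Surjective (ultraMk : (I → A.dom s) → (A.ultrapower U).dom s) :=
  fun x => ⟨x.out, Quotient.out_eq' x⟩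

theorem eventually_out_eq {ι : Type} [Finite ι] {σ : ι → Sg.Sorts} (a : ∀ j, I → A.dom (σ j)) :
    ∀ᶠ i in (U : Filter I), ∀ j, (↑(a j) : (U : Filter I).Germ (A.dom (σ j))).out i = a j i :=
  eventually_all.2 fun _ => Germ.coe_eq.1 (Quotient.out_eq' _)

theorem ultrapower_interpFunc_coe (f : Sg.Func) (a : ∀ j, I → A.dom ((Sg.funcDom f).get j)) :
    (A.ultrapower U).interpFunc f (fun j => ultraMk (a j)) =
      ultraMk fun i => A.interpFunc f fun j => a j i :=
  ultraMk_eq_iff.2 <| (eventually_out_eq a).mono fun _ hi => congrArg _ (funext hi)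

theorem ultrapower_interpPred_coe (P : Sg.Pred) (a : ∀ j, I → A.dom ((Sg.predDom P).get j)) :
    (A.ultrapower U).interpPred P (fun j => ultraMk (a j)) ↔
      ∀ᶠ i in (U : Filter I), A.interpPred P fun j => a j i :=
  eventually_congr <| (eventually_out_eq a).mono fun _ hi => Iff.of_eq (congrArg _ (funext hi))

def germAssign (ν : I → Assign A) : Assign (A.ultrapower U) :=
  fun s n => ultraMk fun i => ν i s n

theorem germAssign_update (ν : I → Assign A) (s : Sg.Sorts) (n : ℕ) (a : I → A.dom s) :
    (germAssign (U := U) ν).update s n (ultraMk a) =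
      germAssign fun i => (ν i).update s n (a i) := by
  funext t m
  unfold germAssign Assign.update
  by_cases hst : s = t
  · subst hst
    by_cases hmn : m = n <;> simp [hmn]
  · simp [hst]

theorem eval_germAssign (ν : I → Assign A) :
    ∀ {s : Sg.Sorts} (t : Term Sg s), t.eval (germAssign (U := U) ν) = ultraMk fun i => t.eval (ν i)
  | _, .var _ _ => rfl
  | _, .app f args => by
      simp only [Term.eval, eval_germAssign ν (args _)]
      exact ultrapower_interpFunc_coe f _

/-- Łoś's theorem. -/
theorem sat_ultrapower_iff :
    ∀ (φ : Formula Sg) (ν : I → Assign A),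
      Sat (A.ultrapower U) (germAssign ν) φ ↔ ∀ᶠ i in (U : Filter I), Sat A (ν i) φ
  | .eq t u, ν => by
      simp only [Sat, eval_germAssign]
      exact ultraMk_eq_iff
  | .pred P args, ν => by
      simp only [Sat, eval_germAssign]
      exact ultrapower_interpPred_coe P _
  | .falsum, _ => iff_of_false id fun h => h.exists.elim fun _ => id
  | .imp φ ψ, ν => by
      simp only [Sat, sat_ultrapower_iff φ ν, sat_ultrapower_iff ψ ν]
      exact Ultrafilter.eventually_imp.symm
  | .all s n φ, ν => by
      simp only [Sat]
      refine ⟨fun h => ?_, fun h x => ?_⟩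
      · by_contra hne
        obtain ⟨a, ha⟩ := (Ultrafilter.eventually_not.2 hne).mono (fun _ hi => not_forall.1 hi)
          |>.choice
        have hsat := h (ultraMk a)
        rw [germAssign_update, sat_ultrapower_iff φ] at hsat
        exact (hsat.and ha).exists.elim fun _ hi => hi.2 hi.1
      · obtain ⟨a, rfl⟩ := ultraMk_surjective x
        rw [germAssign_update, sat_ultrapower_iff φ]
        exact h.mono fun i hi => hi (a i)

noncomputable def diagonal : ElementaryEmbedding A (A.ultrapower U) where
  toFun _ a := ultraMk fun _ => a
  injective _ _ _ h := Germ.const_inj.1 h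
  map_func f args := (ultrapower_interpFunc_coe f fun j _ => args j).symm
  map_pred P args := (eventually_const.symm).trans
    (ultrapower_interpPred_coe P fun j _ => args j).symm
  sat_iff φ ν := eventually_const.symm.trans (sat_ultrapower_iff φ fun _ => ν).symm

theorem diagonal_surjective {s : Sg.Sorts} [Finite (A.dom s)] :
    Function.Surjective ((diagonal (A := A) (U := U)).toFun s) := by
  intro x
  obtain ⟨a, rfl⟩ := ultraMk_surjective x
  obtain ⟨b, hb⟩ := (U.map a).eq_pure_of_finite
  have hab : {b} ∈ U.map a := hb ▸ Ultrafilter.mem_pure.2 rfl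
  exact ⟨b, ultraMk_eq_iff.2 (Filter.Eventually.mono (Ultrafilter.mem_map.1 hab)
    fun _ hi => (hi : a _ = b).symm)⟩

end Ultrapower

open Filter in
theorem le_mk_ultrapower_of_infinite (A : Structure Sg) (J : Type) {s : Sg.Sorts}
    [Infinite (A.dom s)] :
    #J ≤ #((A.ultrapower (Ultrafilter.of (atTop : Filter (Finset J)))).dom s) := by
  classical
  let e := Infinite.natEmbedding (A.dom s)
  have hmem : ∀ α : J,
      ∀ᶠ i : Finset J in (Ultrafilter.of (atTop : Filter (Finset J)) : Filter _), α ∈ i :=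
    fun α => ((eventually_ge_atTop {α}).filter_mono (Ultrafilter.of_le _)).mono
      fun _ hi => Finset.singleton_subset_iff.1 hi
  refine mk_le_of_injective (f := fun α => ultraMk fun i : Finset J =>
    if h : α ∈ i then e (i.equivFin ⟨α, h⟩) else e 0) fun α β hαβ => ?_
  obtain ⟨i, hi, hα, hβ⟩ := ((ultraMk_eq_iff.1 hαβ).and ((hmem α).and (hmem β))).exists
  simp only [dif_pos hα, dif_pos hβ] at hi
  exact congrArg Subtype.val (i.equivFin.injective (Fin.ext (e.injective hi)))

theorem exists_elementaryEmbedding_card_eq (sp : Split Sg Λ) (A : Structure Sg)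
    (κ : Λ → Cardinal) (hsig : ∀ l : Λ, max (sp.partCard l) ℵ₀ ≤ κ l)
    (hdom : ∀ s : Sg.Sorts, Infinite (A.dom s) → #(A.dom s) ≤ κ (sp.sortPart s)) :
    ∃ (B : Structure Sg) (e : ElementaryEmbedding A B),
      (∀ s, Infinite (A.dom s) → #(B.dom s) = κ (sp.sortPart s)) ∧
      ∀ s, Finite (A.dom s) → Function.Surjective (e.toFun s) := by
  let U := Ultrafilter.of (Filter.atTop : Filter (Finset (⨆ l, κ l).out))
  have hX : ∀ s, ∃ X : Set ((A.ultrapower U).dom s), #X ≤ κ (sp.sortPart s) ∧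
      (Infinite (A.dom s) → #X = κ (sp.sortPart s)) := by
    intro s
    by_cases hs : Infinite (A.dom s)
    · obtain ⟨X, hX⟩ := le_mk_iff_exists_set.1 <| (le_ciSup (f := κ) bddAbove_of_small _).trans
        ((mk_out _).symm.le.trans (le_mk_ultrapower_of_infinite A _ (s := s)))
      exact ⟨X, hX.le, fun _ => hX⟩
    · exact ⟨∅, by simp, (absurd · hs)⟩
  choose X hX_le hX_eq using hX
  have hA : ∀ s, #(A.dom s) ≤ κ (sp.sortPart s) := fun s =>
    (finite_or_infinite (A.dom s)).elim
      (fun _ => (lt_aleph0_of_finite _).le.trans (le_of_max_le_right (hsig _))) (hdom s)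
  let G s := Set.range ((diagonal (U := U)).toFun s) ∪ X s
  have hG : ∀ s, #(G s) ≤ κ (sp.sortPart s) := fun s => (mk_union_le _ _).trans <|
    add_le_of_le (le_of_max_le_right (hsig _)) (mk_range_le.trans (hA s)) (hX_le s)
  let D := hull sp G
  have hD : D.IsElementary := Substructure.isElementary_of_isPartTVClosed (hull_isPartTVClosed G)
  refine ⟨_, diagonal.codRestrict D hD fun s a => subset_hull G s (.inl ⟨a, rfl⟩),
    fun s hs => le_antisymm (card_hull_le hsig hG s) ?_, fun s hs x => ?_⟩
  · exact (hX_eq s hs).symm.le.trans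
      (mk_le_mk_of_subset (Set.subset_union_right.trans (subset_hull G s)))
  · obtain ⟨a, ha⟩ := diagonal_surjective (A := A) (U := U) x.1
    exact ⟨a, Subtype.ext ha⟩

end MS

theorem split_upward_LS {Sg : MSSignature} {Λ : Type} (sp : Split Sg Λ)
    (A : Structure Sg) (κ : Λ → Cardinal)
    (hsig : ∀ l : Λ, max (sp.partCard l) ℵ₀ ≤ κ l)
    (hdom : ∀ s : Sg.Sorts, Infinite (A.dom s) → #(A.dom s) ≤ κ (sp.sortPart s)) :
    ∃ (B : Structure Sg) (C : Substructure B), C.IsElementary ∧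
      Nonempty (Iso A C.toStructure) ∧
      (∀ s : Sg.Sorts, Infinite (A.dom s) → #(B.dom s) = κ (sp.sortPart s)) ∧
      (∀ s : Sg.Sorts, Finite (A.dom s) →
        C.carrier s = Set.univ ∧ #(B.dom s) = #(A.dom s)) := by
  obtain ⟨B, e, hinf, hfin⟩ := exists_elementaryEmbedding_card_eq sp A κ hsig hdom
  refine ⟨B, e.range, e.isElementary_range, ⟨e.isoRange⟩, hinf, fun s hs => ?_⟩
  exact ⟨Set.range_eq_univ.2 (hfin s hs),
    (mk_congr (Equiv.ofBijective _ ⟨e.injective s, hfin s hs⟩)).symm⟩
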